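/- arXiv:2301.02139 — 4 statements merged into one kernel-verified Lean document; each statement's English description precedes it below -/
import Mathlib

section
/- Let X be a well-ordered alphabet and let u be a nonempty word on X. Then the following are equivalent: (1) for every factorization u = vw with v, w nonempty, u is pseudo-lexicographically greater than wv; (2) for every factorization u = vw with v, w nonempty, u is pseudo-lexicographically greater than w; (3) for every factorization u = vw with v, w nonempty, v is pseudo-lexicographically greater than w. -/
variable {X : Type*} [LinearOrder X] [WellFoundedLT X]

/-- The partial order `≺` on words: `u ≺ v` iff `u = r ++ x :: s`, `v = r ++ y :: t`
with letters `x < y`. -/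
def Prec (u v : List X) : Prop :=
  ∃ (r s t : List X) (x y : X), x < y ∧ u = r ++ x :: s ∧ v = r ++ y :: t

/-- The pseudo-lexicographic order: `u <_lex v` iff `v` is a proper prefix of `u` or `u ≺ v`. -/
def PLex (u v : List X) : Prop :=
  (v <+: u ∧ v ≠ u) ∨ Prec u v

/-- `u ≤_lex v`. -/
def PLexLe (u v : List X) : Prop := u = v ∨ PLex u v

/-- A Lyndon word (Kharchenko convention): a nonempty word strictly greater in the
pseudo-lexicographic order than each of its proper nonempty suffixes. -/
def IsLyndon (u : List X) : Prop :=
  u ≠ [] ∧ ∀ v w : List X, u = v ++ w → v ≠ [] → w ≠ [] → PLex w u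

/-!
`PLex` is the lexicographic order in which the end of a word behaves like a letter above all
of `X`, i.e. `List.Lex (· > ·)` read backwards. So it is a strict total order, it is
cancellative on the left, and a comparison decided by a mismatch of letters survives appending
on either side.

Then (2) ⇒ (1) and (2) ⇒ (3) are immediate. For (1) ⇒ (2): if `wv <_lex u` but not
`w <_lex u`, then `u = wm` with `|m| = |v|` and `v <_lex m`, so `u = vw <_lex mw`, against (1)
for the factorization `u = wm`. For (3) ⇒ (2) one shows `a <_lex va` for every nonempty suffix
`a` of `u` preceded by a prefix `vq`, by strong induction on `|a|`: if `v` is not a prefix of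
`a`, the comparison `a <_lex vq` given by (3) is decided inside `v`; otherwise `a = vz`, and `z`
is preceded by the longer prefix `vqv`.
-/

section

omit [WellFoundedLT X]

variable {a b c u v w : List X}

theorem Prec.append (h : Prec a c) (b d : List X) : Prec (a ++ b) (c ++ d) := by
  obtain ⟨r, s, t, x, y, hxy, rfl, rfl⟩ := h
  exact ⟨r, s ++ b, t ++ d, x, y, hxy, by simp, by simp⟩

theorem PLex.append_left (h : PLex a b) (p : List X) : PLex (p ++ a) (p ++ b) := by
  rcases h with ⟨hpre, hne⟩ | ⟨r, s, t, x, y, hxy, rfl, rfl⟩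
  · exact Or.inl ⟨(List.prefix_append_right_inj p).2 hpre, by simpa using hne⟩
  · exact Or.inr ⟨p ++ r, s, t, x, y, hxy, by simp, by simp⟩

theorem plex_iff_lex : PLex u v ↔ List.Lex (· > ·) v u := by
  constructor
  · rintro (⟨⟨_ | ⟨y, t⟩, rfl⟩, hne⟩ | ⟨r, s, t, x, y, hxy, rfl, rfl⟩)
    · simp at hne
    · simpa using List.Lex.append_left _ (List.Lex.nil (a := y) (l := t)) v
    · exact List.Lex.append_left _ (List.Lex.rel (r := (· > ·)) hxy) r
  · intro h
    induction h with
    | nil => exact Or.inl ⟨List.nil_prefix, List.cons_ne_nil _ _ |>.symm⟩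
    | rel hxy => exact Or.inr ⟨[], _, _, _, _, hxy, rfl, rfl⟩
    | cons _ ih => exact ih.append_left [_]

theorem PLex.asymm (h : PLex a b) : ¬ PLex b a := by
  rw [plex_iff_lex] at h ⊢
  exact List.lex_asymm (fun h h' => lt_asymm h h') h

theorem plex_trichotomy (a b : List X) : PLex a b ∨ a = b ∨ PLex b a := by
  simp only [plex_iff_lex]
  rcases trichotomous (r := List.Lex (· > ·)) b a with h | h | h
  exacts [Or.inl h, Or.inr (Or.inl h.symm), Or.inr (Or.inr h)]

theorem not_nil_plex (v : List X) : ¬ PLex [] v := by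
  simp [plex_iff_lex]

theorem plex_cons_cons {x y : X} {s t : List X} :
    PLex (x :: s) (y :: t) ↔ x < y ∨ x = y ∧ PLex s t := by
  simp only [plex_iff_lex, List.cons_lex_cons_iff, gt_iff_lt, eq_comm]

theorem plex_append_left_iff (p : List X) : PLex (p ++ a) (p ++ b) ↔ PLex a b := by
  induction p with
  | nil => rfl
  | cons x p ih => simp [plex_cons_cons, ih]

theorem not_plex_append_right (a b : List X) : ¬ PLex a (a ++ b) := by
  simpa using (plex_append_left_iff a).not.2 (not_nil_plex b)

theorem plex_append_self (hb : b ≠ []) : PLex (a ++ b) a :=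
  Or.inl ⟨List.prefix_append a b, by simpa using hb.symm⟩

theorem PLex.append_right (h : PLex a c) (b : List X) : PLex (a ++ b) c := by
  rcases h with ⟨hpre, hne⟩ | hprec
  · refine Or.inl ⟨hpre.trans (List.prefix_append a b), fun hca => hne ?_⟩
    exact hpre.eq_of_length (hpre.length_le.antisymm (by simp [hca]))
  · exact Or.inr (by simpa using hprec.append b [])

theorem PLex.append_of_length_eq (h : PLex a c) (hlen : a.length = c.length) (b : List X) :
    PLex (a ++ b) (c ++ b) := by
  rcases h with ⟨hpre, hne⟩ | hprec
  · exact absurd (hpre.eq_of_length hlen.symm) hne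
  · exact Or.inr (hprec.append b b)

theorem PLex.of_append_right (h : PLex w (v ++ w)) : PLex w v := by
  rcases plex_trichotomy w v with hwv | rfl | hvw
  · exact hwv
  · exact absurd h (not_plex_append_right w w)
  · exact absurd h (hvw.append_right w).asymm

theorem plex_or_prefix_of_append_plex (v : List X) :
    ∀ {c : List X}, PLex (w ++ v) c → PLex w c ∨ w <+: c := by
  induction w with
  | nil => exact fun _ => Or.inr List.nil_prefix
  | cons x s ih =>
    rintro (_ | ⟨y, t⟩) h
    · exact Or.inl (plex_append_self (List.cons_ne_nil x s))
    rcases plex_cons_cons.1 h with hxy | ⟨rfl, hst⟩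
    · exact Or.inl (plex_cons_cons.2 (Or.inl hxy))
    · exact (ih hst).imp (fun h => plex_cons_cons.2 (Or.inr ⟨rfl, h⟩))
        (fun h => List.cons_prefix_cons.2 ⟨rfl, h⟩)

theorem plex_append_of_plex_append (h : PLex a (v ++ b)) (hv : ¬ v <+: a) (c : List X) :
    PLex a (v ++ c) := by
  induction v generalizing a with
  | nil => exact absurd List.nil_prefix hv
  | cons y t ih =>
    obtain _ | ⟨x, s⟩ := a
    · exact absurd h (not_nil_plex _)
    rcases plex_cons_cons.1 h with hxy | ⟨rfl, hst⟩
    · exact plex_cons_cons.2 (Or.inl hxy)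
    · have hts : ¬ t <+: s := fun hts => hv (List.cons_prefix_cons.2 ⟨rfl, hts⟩)
      exact plex_cons_cons.2 (Or.inr ⟨rfl, ih hst hts⟩)

theorem plex_suffix_of_forall_rotate_plex
    (h₁ : ∀ v' w', u = v' ++ w' → v' ≠ [] → w' ≠ [] → PLex (w' ++ v') u)
    (huvw : u = v ++ w) (hv : v ≠ []) (hw : w ≠ []) : PLex w u := by
  have hwvu := h₁ v w huvw hv hw
  rcases plex_or_prefix_of_append_plex v hwvu with hwu | ⟨m, hwm⟩
  · exact hwu
  have hlen : v.length = m.length := by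
    have := congrArg List.length (hwm.trans huvw)
    simp only [List.length_append] at this
    omega
  have hm : m ≠ [] := by
    rintro rfl
    simp_all
  have hvm : PLex v m := (plex_append_left_iff w).1 (hwm ▸ hwvu)
  have humw : PLex u (m ++ w) := huvw ▸ hvm.append_of_length_eq hlen w
  exact (humw.asymm (h₁ w m hwm.symm hw hm)).elim

theorem plex_append_of_forall_suffix_plex_prefix (hv : v ≠ [])
    (h₃ : ∀ v' w', u = v' ++ w' → v' ≠ [] → w' ≠ [] → PLex w' v')
    (q a : List X) (hu : u = v ++ q ++ a) (ha : a ≠ []) : PLex a (v ++ a) := by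
  induction hn : a.length using Nat.strong_induction_on generalizing q a with
  | _ n ih =>
  have hap : PLex a (v ++ q) := h₃ _ a hu (by simp [hv]) ha
  by_cases hva : v <+: a
  · obtain ⟨z, rfl⟩ := hva
    obtain rfl | hz := eq_or_ne z []
    · rw [List.append_nil] at hap
      exact absurd hap (not_plex_append_right v q)
    · have hlt : z.length < n := by simp [← hn, List.length_pos_iff.2 hv]
      have hz : PLex z (v ++ z) := ih _ hlt (q ++ v) z (by simp [hu]) hz rfl
      exact (plex_append_left_iff v).2 hz
  · exact plex_append_of_plex_append hap hva a

end

theorem lyndon_tfae_general (u : List X) :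
    List.TFAE
      [∀ v w : List X, u = v ++ w → v ≠ [] → w ≠ [] → PLex (w ++ v) u,
       ∀ v w : List X, u = v ++ w → v ≠ [] → w ≠ [] → PLex w u,
       ∀ v w : List X, u = v ++ w → v ≠ [] → w ≠ [] → PLex w v] := by
  tfae_have 1 → 2
  | h₁, _, _, huvw, hv, hw => plex_suffix_of_forall_rotate_plex h₁ huvw hv hw
  tfae_have 2 → 1
  | h₂, v, w, huvw, hv, hw => (h₂ v w huvw hv hw).append_right v
  tfae_have 2 → 3
  | h₂, v, w, huvw, hv, hw => (huvw ▸ h₂ v w huvw hv hw).of_append_right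
  tfae_have 3 → 2
  | h₃, v, w, huvw, hv, hw =>
    huvw ▸ plex_append_of_forall_suffix_plex_prefix hv h₃ [] w (by simp [huvw]) hw
  tfae_finish

/-- The three characterizations of Lyndon words are equivalent:
for a nonempty word `u`, (1) `u >_lex w ++ v` for every factorization `u = v ++ w`
with `v, w` nonempty; (2) `u >_lex w` for every such factorization;
(3) `v >_lex w` for every such factorization. -/
theorem lyndon_tfae (u : List X) (hu : u ≠ []) :
    List.TFAE
      [∀ v w : List X, u = v ++ w → v ≠ [] → w ≠ [] → PLex (w ++ v) u,
       ∀ v w : List X, u = v ++ w → v ≠ [] → w ≠ [] → PLex w u,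
       ∀ v w : List X, u = v ++ w → v ≠ [] → w ≠ [] → PLex w v] :=
  lyndon_tfae_general u
end

section
/- If a Lyndon word v is a factor of a word u, then v is a factor of one of the Lyndon atoms of u (the factors appearing in the Lyndon decomposition of u as a nondecreasing product of Lyndon words). -/
/-!
Suppose the Lyndon word `v` is not inside a single atom. Cutting `u = w₁ ⋯ w_r` at the atom `wᵢ`
in which `v` starts, `v = s t` where `s` is a nonempty suffix of `wᵢ` and `t` is a nonempty prefix
of `wᵢ₊₁ ⋯ w_r`; some nonempty suffix `t'` of `t` is then a prefix of a later atom `wⱼ`. Since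
longer words are smaller in the pseudo-lexicographic order and a Lyndon word dominates its
suffixes,
  `v <_lex s ≤_lex wᵢ ≤_lex wⱼ ≤_lex t' <_lex v`,
which is absurd.
-/

variable {X : Type*} [LinearOrder X] [WellFoundedLT X]

/-- `l` is the Lyndon decomposition of `u`: `u` is the concatenation of the Lyndon
words in `l`, listed in nondecreasing pseudo-lexicographic order. -/
def IsLyndonDecomp (u : List X) (l : List (List X)) : Prop :=
  u = l.flatten ∧ (∀ v ∈ l, IsLyndon v) ∧ l.Chain' PLexLe

theorem List.exists_isSuffix_isPrefix_of_isPrefix_flatten {α : Type*} {L : List (List α)}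
    {t : List α} (ht : t ≠ []) (h : t <+: L.flatten) :
    ∃ w ∈ L, ∃ t', t' ≠ [] ∧ t' <:+ t ∧ t' <+: w := by
  induction L generalizing t with
  | nil => exact absurd (List.prefix_nil.mp h) ht
  | cons w L ih =>
    rw [List.flatten_cons] at h
    rcases List.prefix_or_prefix_of_prefix h (w.prefix_append _) with htw | ⟨t₁, rfl⟩
    · exact ⟨w, List.mem_cons_self, t, ht, List.suffix_refl t, htw⟩
    rcases eq_or_ne t₁ [] with rfl | ht₁
    · exact ⟨w, List.mem_cons_self, w ++ [], ht, List.suffix_refl _, by simp⟩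
    obtain ⟨w', hw', t', ht', hsuf, hpre⟩ := ih ht₁ ((List.prefix_append_right_inj w).mp h)
    exact ⟨w', List.mem_cons_of_mem _ hw', t', ht', hsuf.trans (List.suffix_append w t₁), hpre⟩

section

omit [WellFoundedLT X]

open OrderDual

/-- `PLex` is the order dual of the lexicographic order on words over the dual alphabet. -/
def plexKey (u : List X) : (List Xᵒᵈ)ᵒᵈ := toDual (u.map toDual)

theorem PLex.plexKey_lt {u v : List X} (h : PLex u v) : plexKey u < plexKey v := by
  show v.map toDual < u.map toDual
  rcases h with ⟨⟨c, rfl⟩, hne⟩ | ⟨r, s, t, x, y, hxy, rfl, rfl⟩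
  · obtain ⟨a, c, rfl⟩ := List.exists_cons_of_ne_nil (fun hc : c = [] => hne (by simp [hc]))
    simpa using List.append_left_lt (l₁ := v.map toDual) (List.nil_lt_cons (toDual a) _)
  · simpa using List.append_left_lt (l₁ := r.map toDual)
      (List.Lex.rel (toDual_lt_toDual.mpr hxy) : (toDual y :: t.map toDual) < _)

theorem PLexLe.plexKey_le {u v : List X} (h : PLexLe u v) : plexKey u ≤ plexKey v := by
  rcases h with rfl | h
  exacts [le_rfl, h.plexKey_lt.le]

theorem IsLyndon.plexLe_of_isSuffix {w s : List X} (hw : IsLyndon w) (hs : s <:+ w)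
    (hs₀ : s ≠ []) : PLexLe s w := by
  obtain ⟨a, rfl⟩ := hs
  rcases eq_or_ne a [] with rfl | ha
  exacts [Or.inl rfl, Or.inr (hw.2 a s rfl ha hs₀)]

theorem not_isLyndon_append_of_isSuffix_of_isPrefix_flatten {w s t : List X}
    {rest : List (List X)} (hw : IsLyndon w) (hle : ∀ w' ∈ rest, plexKey w ≤ plexKey w')
    (hs : s <:+ w) (hs₀ : s ≠ []) (ht : t <+: rest.flatten) (ht₀ : t ≠ []) :
    ¬ IsLyndon (s ++ t) := by
  intro hv
  obtain ⟨w', hw', t', ht', ⟨q, rfl⟩, hpre⟩ :=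
    List.exists_isSuffix_isPrefix_of_isPrefix_flatten ht₀ ht
  have hv_lt_s : PLex (s ++ (q ++ t')) s :=
    Or.inl ⟨s.prefix_append _, fun h => ht₀ (by simpa using h.symm)⟩
  have hw'_le_t' : PLexLe w' t' := by
    rcases eq_or_ne t' w' with rfl | hne
    exacts [Or.inl rfl, Or.inr (Or.inl ⟨hpre, hne⟩)]
  have ht'_lt_v : PLex t' (s ++ (q ++ t')) :=
    hv.2 (s ++ q) t' (by simp) (by simp [hs₀]) ht'
  apply lt_irrefl (plexKey (s ++ (q ++ t')))
  calc plexKey (s ++ (q ++ t'))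
      < plexKey s := hv_lt_s.plexKey_lt
    _ ≤ plexKey w := (hw.plexLe_of_isSuffix hs hs₀).plexKey_le
    _ ≤ plexKey w' := hle w' hw'
    _ ≤ plexKey t' := hw'_le_t'.plexKey_le
    _ < plexKey (s ++ (q ++ t')) := ht'_lt_v.plexKey_lt

end

/-- A Lyndon factor of a word `u` is a factor of one of the
Lyndon atoms of `u`. -/
theorem lyndon_factor_of_atom (u v : List X) (l : List (List X))
    (hl : IsLyndonDecomp u l) (hv : IsLyndon v) (hf : v <:+: u) :
    ∃ w ∈ l, v <:+: w := by
  obtain ⟨rfl, hlyn, hchain⟩ := hl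
  induction l with
  | nil => exact absurd (List.eq_nil_of_infix_nil hf) hv.1
  | cons w rest ih =>
    have hsorted : ∀ w' ∈ rest, plexKey w ≤ plexKey w' :=
      (List.pairwise_cons.mp (List.pairwise_map.mp ((List.isChain_map plexKey).mpr
        (hchain.imp fun _ _ h => h.plexKey_le)).pairwise)).1
    rw [List.flatten_cons] at hf
    rcases List.infix_append_iff_ne_nil.mp hf with hw | hrest | ⟨s, t, hs₀, ht₀, rfl, hs, ht⟩
    · exact ⟨w, List.mem_cons_self, hw⟩
    · obtain ⟨w', hw', hvw'⟩ :=
        ih hrest (fun x hx => hlyn x (List.mem_cons_of_mem _ hx)) hchain.tail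
      exact ⟨w', List.mem_cons_of_mem _ hw', hvw'⟩
    · exact absurd hv (not_isLyndon_append_of_isSuffix_of_isPrefix_flatten
        (hlyn w List.mem_cons_self) hsorted hs hs₀ ht ht₀)
end

section
/- Let u = u₁⋯u_m and v = v₁⋯v_n be nonempty words given in their Lyndon decompositions (so u_i and v_j are Lyndon words with u₁ ≤_lex ⋯ ≤_lex u_m and v₁ ≤_lex ⋯ ≤_lex v_n). Then u <_lex v if and only if either n < m and u_i = v_i for all i ≤ n, or there exists l ≤ min{m, n} with u_i = v_i for i < l and u_l <_lex v_l. -/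
variable {X : Type*} [LinearOrder X] [WellFoundedLT X]

/-!
`<_lex` is a strict total order on words, and the factorwise comparison on the right-hand side
is trichotomous on factor sequences, so it suffices to show that it implies `u <_lex v`.
Peeling off common factors, this comes down to `a <_lex b` for the first differing factors.
If `a ≺ b` the letters decide. Otherwise `a = b d` with `d` a proper suffix of the Lyndon word
`a`, so `d <_lex a <_lex b ≤_lex v_j` for every later factor `v_j` of `v`; hence `d` either loses
to `v_j` at a letter or has `v_j` as a proper prefix, and in the latter case the remainder of `d`
is again a proper suffix of `a`.
-/

section

variable {α : Type*} [LinearOrder α]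

theorem not_pLex_nil (v : List α) : ¬ PLex [] v := by
  rintro (⟨h, hne⟩ | ⟨r, s, t, x, y, -, h, -⟩)
  · exact hne (List.prefix_nil.mp h)
  · simp at h

theorem pLex_nil {u : List α} (hu : u ≠ []) : PLex u [] :=
  Or.inl ⟨List.nil_prefix, fun h => hu h.symm⟩

theorem pLex_cons_cons {x y : α} {u v : List α} :
    PLex (x :: u) (y :: v) ↔ x < y ∨ x = y ∧ PLex u v := by
  constructor
  · rintro (⟨h, hne⟩ | ⟨_ | ⟨z, r⟩, s, t, a, b, hab, hu, hv⟩)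
    · rw [List.cons_prefix_cons] at h
      exact Or.inr ⟨h.1.symm, Or.inl ⟨h.2, fun he => hne (by rw [h.1, he])⟩⟩
    · simp only [List.nil_append, List.cons.injEq] at hu hv
      exact Or.inl (hu.1 ▸ hv.1 ▸ hab)
    · simp only [List.cons_append, List.cons.injEq] at hu hv
      exact Or.inr ⟨hu.1.trans hv.1.symm, Or.inr ⟨r, s, t, a, b, hab, hu.2, hv.2⟩⟩
  · rintro (h | ⟨rfl, ⟨h, hne⟩ | ⟨r, s, t, a, b, hab, rfl, rfl⟩⟩)
    · exact Or.inr ⟨[], u, v, x, y, h, rfl, rfl⟩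
    · exact Or.inl ⟨List.cons_prefix_cons.mpr ⟨rfl, h⟩, by simpa using hne⟩
    · exact Or.inr ⟨x :: r, s, t, a, b, hab, rfl, rfl⟩

theorem pLex_irrefl (u : List α) : ¬ PLex u u := by
  induction u with
  | nil => exact not_pLex_nil []
  | cons x u ih =>
    rw [pLex_cons_cons]
    rintro (h | ⟨-, h⟩)
    exacts [lt_irrefl x h, ih h]

theorem PLex.trans {u v w : List α} (huv : PLex u v) (hvw : PLex v w) : PLex u w := by
  induction u generalizing v w with
  | nil => exact absurd huv (not_pLex_nil v)
  | cons x u ih =>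
    rcases v with _ | ⟨y, v⟩
    · exact absurd hvw (not_pLex_nil w)
    rcases w with _ | ⟨z, w⟩
    · exact pLex_nil (List.cons_ne_nil x u)
    rw [pLex_cons_cons] at huv hvw ⊢
    rcases huv with hxy | ⟨rfl, huv⟩ <;> rcases hvw with hyz | ⟨rfl, hvw⟩
    exacts [Or.inl (hxy.trans hyz), Or.inl hxy, Or.inl hyz, Or.inr ⟨rfl, ih huv hvw⟩]

theorem PLex.asymm_s7 {u v : List α} (huv : PLex u v) : ¬ PLex v u :=
  fun hvu => pLex_irrefl u (huv.trans hvu)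

theorem pLex_trichotomy (u v : List α) : u = v ∨ PLex u v ∨ PLex v u := by
  induction u generalizing v with
  | nil =>
    rcases v with _ | ⟨y, v⟩
    exacts [Or.inl rfl, Or.inr (Or.inr (pLex_nil (List.cons_ne_nil y v)))]
  | cons x u ih =>
    rcases v with _ | ⟨y, v⟩
    · exact Or.inr (Or.inl (pLex_nil (List.cons_ne_nil x u)))
    simp only [pLex_cons_cons, List.cons.injEq]
    rcases lt_trichotomy x y with hxy | rfl | hyx
    · exact Or.inr (Or.inl (Or.inl hxy))
    · rcases ih v with rfl | huv | hvu
      exacts [Or.inl ⟨rfl, rfl⟩, Or.inr (Or.inl (Or.inr ⟨rfl, huv⟩)),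
        Or.inr (Or.inr (Or.inr ⟨rfl, hvu⟩))]
    · exact Or.inr (Or.inr (Or.inl hyx))

theorem PLexLe.trans {u v w : List α} (huv : PLexLe u v) (hvw : PLexLe v w) : PLexLe u w := by
  rcases huv with rfl | huv
  · exact hvw
  rcases hvw with rfl | hvw
  exacts [Or.inr huv, Or.inr (huv.trans hvw)]

instance : IsTrans (List α) PLexLe := ⟨fun _ _ _ => PLexLe.trans⟩

theorem PLex.trans_pLexLe {u v w : List α} (huv : PLex u v) (hvw : PLexLe v w) : PLex u w := by
  rcases hvw with rfl | hvw
  exacts [huv, huv.trans hvw]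

theorem PLex.append_left_s7 {u v : List α} (w : List α) (huv : PLex u v) :
    PLex (w ++ u) (w ++ v) := by
  induction w with
  | nil => exact huv
  | cons x w ih => exact pLex_cons_cons.mpr (Or.inr ⟨rfl, ih⟩)

theorem Prec.append_s7 {u v : List α} (huv : Prec u v) (u' v' : List α) :
    Prec (u ++ u') (v ++ v') := by
  obtain ⟨r, s, t, x, y, hxy, rfl, rfl⟩ := huv
  exact ⟨r, s ++ u', t ++ v', x, y, hxy, by simp, by simp⟩

theorem IsLyndon.suffix_append_pLex_flatten {a c d : List α} (ha : IsLyndon a)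
    (hcd : a = c ++ d) (hc : c ≠ []) (hd : d ≠ []) {fs : List (List α)}
    (hfs : ∀ f ∈ fs, PLex a f) (u : List α) : PLex (d ++ u) fs.flatten := by
  induction fs generalizing c d with
  | nil => exact pLex_nil (List.append_ne_nil_of_left_ne_nil hd u)
  | cons f fs ih =>
    have hdf : PLex d f := (ha.2 c d hcd hc hd).trans (hfs f List.mem_cons_self)
    rcases hdf with ⟨⟨d', rfl⟩, hne⟩ | hprec
    · have hd' : d' ≠ [] := by rintro rfl; exact hne (List.append_nil f).symm
      rw [List.flatten_cons, List.append_assoc]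
      exact (ih (c := c ++ f) (by rw [hcd, List.append_assoc]) (by simp [hc]) hd'
        fun g hg => hfs g (List.mem_cons_of_mem f hg)).append_left_s7 f
    · exact Or.inr (hprec.append_s7 u _)

theorem IsLyndon.append_pLex_append_flatten {a b : List α} (ha : IsLyndon a)
    (hab : PLex a b) {fs : List (List α)} (hfs : ∀ f ∈ fs, PLexLe b f) (u : List α) :
    PLex (a ++ u) (b ++ fs.flatten) := by
  rcases eq_or_ne b [] with rfl | hb
  · have hfs_nil : fs.flatten = [] := List.flatten_eq_nil_iff.mpr fun f hf =>
      ((hfs f hf).resolve_right (not_pLex_nil f)).symm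
    simpa [hfs_nil] using pLex_nil (List.append_ne_nil_of_left_ne_nil ha.1 u)
  rcases hab with ⟨⟨d, rfl⟩, hne⟩ | hprec
  · have hd : d ≠ [] := by rintro rfl; exact hne (List.append_nil b).symm
    rw [List.append_assoc]
    exact (ha.suffix_append_pLex_flatten rfl hb hd
      (fun f hf => PLex.trans_pLexLe (Or.inl ⟨⟨d, rfl⟩, hne⟩) (hfs f hf)) u).append_left_s7 b
  · exact Or.inr (hprec.append_s7 u _)

def FactorPLex (ls ms : List (List α)) : Prop :=
  (ms.length < ls.length ∧ ls.take ms.length = ms) ∨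
    ∃ i, ∃ h₁ : i < ls.length, ∃ h₂ : i < ms.length,
      ls.take i = ms.take i ∧ PLex ls[i] ms[i]

theorem not_factorPLex_nil (ms : List (List α)) : ¬ FactorPLex [] ms := by
  simp [FactorPLex]

theorem factorPLex_nil_iff {ls : List (List α)} : FactorPLex ls [] ↔ ls ≠ [] := by
  simp [FactorPLex, List.length_pos_iff]

theorem factorPLex_cons_cons {a b : List α} {ls ms : List (List α)} :
    FactorPLex (a :: ls) (b :: ms) ↔ PLex a b ∨ a = b ∧ FactorPLex ls ms := by
  constructor
  · rintro (⟨hlen, htake⟩ | ⟨_ | i, h₁, h₂, htake, hi⟩)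
    · simp only [List.length_cons, List.take_succ_cons, List.cons.injEq] at hlen htake
      exact Or.inr ⟨htake.1, Or.inl ⟨by omega, htake.2⟩⟩
    · exact Or.inl hi
    · simp only [List.take_succ_cons, List.cons.injEq] at htake
      exact Or.inr
        ⟨htake.1, Or.inr ⟨i, by simpa using h₁, by simpa using h₂, htake.2, hi⟩⟩
  · rintro (hab | ⟨rfl, ⟨hlen, htake⟩ | ⟨i, h₁, h₂, htake, hi⟩⟩)
    · exact Or.inr ⟨0, by simp, by simp, rfl, hab⟩
    · exact Or.inl ⟨by simpa using hlen, by simpa using htake⟩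
    · exact Or.inr ⟨i + 1, by simpa using h₁, by simpa using h₂, by simpa using htake, hi⟩

theorem factorPLex_trichotomy (ls ms : List (List α)) :
    ls = ms ∨ FactorPLex ls ms ∨ FactorPLex ms ls := by
  induction ls generalizing ms with
  | nil =>
    rcases ms with _ | ⟨b, ms⟩
    exacts [Or.inl rfl, Or.inr (Or.inr (factorPLex_nil_iff.mpr (List.cons_ne_nil b ms)))]
  | cons a ls ih =>
    rcases ms with _ | ⟨b, ms⟩
    · exact Or.inr (Or.inl (factorPLex_nil_iff.mpr (List.cons_ne_nil a ls)))
    simp only [factorPLex_cons_cons, List.cons.injEq]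
    rcases pLex_trichotomy a b with rfl | hab | hba
    · rcases ih ms with rfl | hlm | hml
      exacts [Or.inl ⟨rfl, rfl⟩, Or.inr (Or.inl (Or.inr ⟨rfl, hlm⟩)),
        Or.inr (Or.inr (Or.inr ⟨rfl, hml⟩))]
    · exact Or.inr (Or.inl (Or.inl hab))
    · exact Or.inr (Or.inr (Or.inl hba))

theorem pLex_flatten_of_factorPLex {ls ms : List (List α)} (hls : ∀ v ∈ ls, IsLyndon v)
    (hms : ms.IsChain PLexLe) (h : FactorPLex ls ms) : PLex ls.flatten ms.flatten := by
  induction ls generalizing ms with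
  | nil => exact absurd h (not_factorPLex_nil ms)
  | cons a ls ih =>
    rcases ms with _ | ⟨b, ms⟩
    · exact pLex_nil (List.append_ne_nil_of_left_ne_nil (hls a List.mem_cons_self).1 _)
    rw [List.flatten_cons, List.flatten_cons]
    rcases factorPLex_cons_cons.mp h with hab | ⟨rfl, hlm⟩
    · exact (hls a List.mem_cons_self).append_pLex_append_flatten hab
        (List.pairwise_cons.mp hms.pairwise).1 _
    · exact (ih (fun v hv => hls v (List.mem_cons_of_mem a hv)) hms.tail hlm).append_left_s7 a

end

theorem plex_iff_lyndon_decomp_general (ls ms : List (List X))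
    (hls' : (∀ v ∈ ls, IsLyndon v) ∧ ls.Chain' PLexLe)
    (hms' : (∀ v ∈ ms, IsLyndon v) ∧ ms.Chain' PLexLe) :
    PLex ls.flatten ms.flatten ↔
      (ms.length < ls.length ∧ ls.take ms.length = ms) ∨
      (∃ i, ∃ h₁ : i < ls.length, ∃ h₂ : i < ms.length,
        ls.take i = ms.take i ∧ PLex ls[i] ms[i]) := by
  refine ⟨fun h => ?_, pLex_flatten_of_factorPLex hls'.1 hms'.2⟩
  rcases factorPLex_trichotomy ls ms with rfl | hlm | hml
  · exact absurd h (pLex_irrefl _)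
  · exact hlm
  · exact absurd h (pLex_flatten_of_factorPLex hms'.1 hls'.2 hml).asymm_s7

/-- Comparison of two words via their Lyndon decompositions:
`u <_lex v` iff either the decomposition of `v` is a proper "prefix" of that of `u`,
or the decompositions first differ at an index `l` where `u_l <_lex v_l`. -/
theorem plex_iff_lyndon_decomp (ls ms : List (List X)) (hls : ls ≠ []) (hms : ms ≠ [])
    (hls' : (∀ v ∈ ls, IsLyndon v) ∧ ls.Chain' PLexLe)
    (hms' : (∀ v ∈ ms, IsLyndon v) ∧ ms.Chain' PLexLe) :
    PLex ls.flatten ms.flatten ↔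
      (ms.length < ls.length ∧ ls.take ms.length = ms) ∨
      (∃ i, ∃ h₁ : i < ls.length, ∃ h₂ : i < ms.length,
        ls.take i = ms.take i ∧ PLex ls[i] ms[i]) :=
  plex_iff_lyndon_decomp_general ls ms hls' hms'
end

section
/- Let V be a finite antichain of Lyndon words over a well-ordered alphabet X. Then for n > #(V \ X) + 1 there are no (n−1)-ambiguities on V; that is, A_n(V) = ∅. -/
/-!
Write an ambiguity as `v₁ v₂ ⋯ vₙ`. Minimality of each link forces the factor of `V` met in
`vᵢ vᵢ₊₁` to be `fᵢ = sᵢ vᵢ₊₁` with `sᵢ` a nonempty suffix of `vᵢ`; in particular `fᵢ ∈ V \ X`.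
Then `sᵢ₊₁` is a proper nonempty suffix of the Lyndon word `fᵢ`, so `fᵢ₊₁ = sᵢ₊₁ vᵢ₊₂ ≺ fᵢ`.
The `n - 1` words `fᵢ` are therefore strictly decreasing, hence distinct elements of `V \ X`.
-/

variable {X : Type*} [LinearOrder X] [WellFoundedLT X]

/-- `w` has no factor belonging to `V`. -/
def NoFactorIn (V : Set (List X)) (w : List X) : Prop := ∀ f ∈ V, ¬ f <:+: w

/-- The chain conditions defining a `p`-ambiguity decomposition `w = v₁ v₂ ⋯ v_{p+1}`. -/
def IsAmbiguityChain (V : Set (List X)) (vs : List (List X)) : Prop :=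
  (∃ x : X, vs.headI = [x] ∧ [x] ∉ V) ∧
  (∀ v ∈ vs.tail, v ≠ [] ∧ NoFactorIn V v) ∧
  vs.Chain' (fun a b =>
    (∃ f ∈ V, f <:+: a ++ b) ∧ ∀ t, t <+: b → t ≠ b → NoFactorIn V (a ++ t))

/-- `A_n(V)`: `A_0(V) = {1}`, `A_1(V) = X \ V`, `A_2(V) = V \ X`, and for `n ≥ 3`,
`A_n(V)` is the set of `(n-1)`-ambiguities on `V`. -/
def ambiguitySet (V : Set (List X)) : ℕ → Set (List X)
  | 0 => {([] : List X)}
  | 1 => {w | ∃ x : X, w = [x] ∧ w ∉ V}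
  | 2 => {w | w ∈ V ∧ w.length ≠ 1}
  | (n + 3) => {w | ∃ vs : List (List X), vs.length = n + 3 ∧ w = vs.flatten ∧
      IsAmbiguityChain V vs}

theorem List.length_le_encard_of_isChain_gt {α : Type*} [Preorder α] {l : List α}
    (hl : l.IsChain (· > ·)) {S : Set α} (hS : ∀ x ∈ l, x ∈ S) : (l.length : ℕ∞) ≤ S.encard := by
  classical
  have hnodup : l.Nodup := hl.pairwise.nodup
  calc (l.length : ℕ∞) = (l.toFinset : Set α).encard := by
        rw [Set.encard_coe_eq_coe_finsetCard, List.toFinset_card_of_nodup hnodup]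
    _ ≤ S.encard := Set.encard_le_encard fun x hx => hS x (by simpa using hx)

section
omit [LinearOrder X] [WellFoundedLT X]

def AmbiguityLink (V : Set (List X)) (a b : List X) : Prop :=
  (∃ f ∈ V, f <:+: a ++ b) ∧ ∀ t, t <+: b → t ≠ b → NoFactorIn V (a ++ t)

theorem AmbiguityLink.exists_suffix_append_mem {V : Set (List X)} {a b : List X}
    (h : AmbiguityLink V a b) (hb : b ≠ []) (hbV : NoFactorIn V b) :
    ∃ s, s ≠ [] ∧ s <:+ a ∧ s ++ b ∈ V := by
  obtain ⟨⟨f, hfV, p, q, hpq⟩, hmin⟩ := h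
  have hq : q = [] := by
    by_contra hq
    refine hmin b.dropLast b.dropLast_prefix (fun h => hb ?_) f hfV ⟨p, q.dropLast, ?_⟩
    · have := congrArg List.length h
      simp only [List.length_dropLast] at this
      exact List.eq_nil_of_length_eq_zero (by omega)
    · rw [← List.dropLast_append_of_ne_nil hb, ← hpq, List.dropLast_append_of_ne_nil hq]
  subst hq
  rw [List.append_nil] at hpq
  rcases List.append_eq_append_iff.mp hpq with ⟨s, rfl, rfl⟩ | ⟨c, -, rfl⟩
  · refine ⟨s, ?_, List.suffix_append p s, hfV⟩
    rintro rfl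
    exact hbV _ hfV (by simp)
  · exact absurd (List.infix_append' c f []) (by simpa using hbV f hfV)

end

section
omit [WellFoundedLT X]

theorem Prec.append_right {u v : List X} (h : Prec u v) (w : List X) : Prec (u ++ w) v := by
  obtain ⟨r, s, t, x, y, hxy, rfl, rfl⟩ := h
  exact ⟨r, s ++ w, t, x, y, hxy, by simp, rfl⟩

theorem Prec.lt {u v : List X} (h : Prec u v) : u < v := by
  obtain ⟨r, s, t, x, y, hxy, rfl, rfl⟩ := h
  exact List.Lex.append_left _ (.rel hxy) r

theorem IsLyndon.prec_of_eq_append {u v w : List X} (hu : IsLyndon u) (huvw : u = v ++ w)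
    (hv : v ≠ []) (hw : w ≠ []) : Prec w u := by
  refine (hu.2 v w huvw hv hw).resolve_left fun ⟨hpre, _⟩ => hv ?_
  simpa [huvw] using hpre.length_le

theorem IsLyndon.append_lt {s b s' c : List X} (h : IsLyndon (s ++ b)) (hs : s ≠ [])
    (hs' : s' ≠ []) (hsuf : s' <:+ b) : s' ++ c < s ++ b := by
  obtain ⟨d, rfl⟩ := hsuf
  exact ((h.prec_of_eq_append (v := s ++ d) (by simp) (by simp [hs]) hs').append_right c).lt

theorem exists_isChain_gt_of_isChain_ambiguityLink {V : Set (List X)}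
    (hLyndon : ∀ v ∈ V, IsLyndon v) (a : List X) (vs : List (List X))
    (hvs : ∀ v ∈ vs, v ≠ [] ∧ NoFactorIn V v) (hchain : (a :: vs).IsChain (AmbiguityLink V)) :
    ∃ fs : List (List X), fs.length = vs.length ∧ fs.IsChain (· > ·) ∧
      (∀ f ∈ fs, f ∈ V ∧ f.length ≠ 1) ∧ ∀ f ∈ fs.head?, ∃ s c, s ≠ [] ∧ s <:+ a ∧ f = s ++ c := by
  induction vs generalizing a with
  | nil => exact ⟨[], rfl, List.isChain_nil, by simp, by simp⟩
  | cons b vs ih =>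
    obtain ⟨hab, hchain⟩ := List.isChain_cons_cons.mp hchain
    obtain ⟨hb, hbV⟩ := hvs b (by simp)
    obtain ⟨s, hs, hsa, hsbV⟩ := hab.exists_suffix_append_mem hb hbV
    obtain ⟨fs, hlen, hfs, hfsV, hhead⟩ := ih b (fun v hv => hvs v (by simp [hv])) hchain
    refine ⟨(s ++ b) :: fs, by simp [hlen], ?_, ?_, by simpa using ⟨s, hs, hsa, b, rfl⟩⟩
    · refine List.isChain_cons.mpr ⟨fun f hf => ?_, hfs⟩
      obtain ⟨s', c, hs', hs'b, rfl⟩ := hhead f hf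
      exact (hLyndon _ hsbV).append_lt hs hs' hs'b
    · simp only [List.mem_cons, forall_eq_or_imp]
      refine ⟨⟨hsbV, ?_⟩, hfsV⟩
      have := List.length_pos_iff.mpr hs
      have := List.length_pos_iff.mpr hb
      simp only [List.length_append]
      omega

theorem IsAmbiguityChain.length_le {V : Set (List X)} (hLyndon : ∀ v ∈ V, IsLyndon v)
    {vs : List (List X)} (h : IsAmbiguityChain V vs) :
    (vs.length : ℕ∞) ≤ {v | v ∈ V ∧ v.length ≠ 1}.encard + 1 := by
  obtain ⟨-, htail, hchain⟩ := h
  cases vs with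
  | nil => simp
  | cons a vs =>
    obtain ⟨fs, hlen, hfs, hfsV, -⟩ :=
      exists_isChain_gt_of_isChain_ambiguityLink hLyndon a vs htail hchain
    rw [List.length_cons, Nat.cast_succ, ← hlen]
    gcongr
    exact List.length_le_encard_of_isChain_gt hfs hfsV

end

theorem ambiguitySet_eq_empty_general (V : Set (List X))
    (hLyndon : ∀ v ∈ V, IsLyndon v)
    (n : ℕ) (hn : {v | v ∈ V ∧ v.length ≠ 1}.encard + 1 < (n : ℕ∞)) :
    ambiguitySet V n = ∅ := by
  match n with
  | 0 => simp at hn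
  | 1 => simp at hn
  | 2 =>
    have h0 : {v | v ∈ V ∧ v.length ≠ 1}.encard = 0 := by
      rw [← Order.lt_one_iff]
      exact (ENat.add_lt_add_iff_right ENat.one_ne_top).mp (by simpa [one_add_one_eq_two] using hn)
    exact Set.encard_eq_zero.mp h0
  | m + 3 =>
    refine Set.eq_empty_iff_forall_notMem.mpr fun w ⟨vs, hlen, _, hvs⟩ => ?_
    have := hvs.length_le hLyndon
    rw [hlen] at this
    exact (hn.trans_le this).false

/-- If `V` is a finite antichain of Lyndon words, then
`A_n(V) = ∅` for all `n > #(V \ X) + 1`. -/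
theorem ambiguitySet_eq_empty (V : Set (List X)) (hfin : V.Finite)
    (hLyndon : ∀ v ∈ V, IsLyndon v)
    (hanti : ∀ u ∈ V, ∀ v : List X, v <:+: u → v ≠ u → v ∉ V)
    (n : ℕ) (hn : {v | v ∈ V ∧ v.length ≠ 1}.encard + 1 < (n : ℕ∞)) :
    ambiguitySet V n = ∅ :=
  ambiguitySet_eq_empty_general V hLyndon n hn
end
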